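/- (Depth-1 Sakugawa–Seki / generalized Euler) For a positive integer s, a variable t, and n ≥ 1: ∑_{m=1}^n (-1)^m C(n,m) t^m / m^s = ∑_{n ≥ n_1 ≥ ... ≥ n_s ≥ 1} ((1-t)^{n_s} - 1)/(n_1 ··· n_s). -/

import Mathlib

/-- Weakly decreasing chains `hi ≥ f 0 ≥ f 1 ≥ ⋯ ≥ f (d-1) ≥ lo`. -/
def chainsIcc (d lo hi : ℕ) : Finset (Fin d → ℕ) :=
  (Fintype.piFinset fun _ : Fin d => Finset.Icc lo hi).filter
    fun f => ∀ i j : Fin d, i ≤ j → f j ≤ f i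

/-- `idx f j` is the paper's `n_j` (1-indexed entry of the chain `f`). -/
def idx {w : ℕ} (f : Fin w → ℕ) (j : ℕ) : ℕ :=
  if h : j - 1 < w then f ⟨j - 1, h⟩ else 0

/-!
Both sides satisfy the recursion `X_{s+1}(n) = ∑_{k=1}^n X_s(k) / k`. On the chain side this is
peeling off the largest entry `n_1 = k`; on the binomial side it follows by exchanging the two sums
and the identity `∑_{k=m}^n C(k,m) / k = C(n,m) / m`. At `s = 1` both sides equal
`∑_{k=1}^n ((1 - t)^k - 1) / k`, by the binomial theorem.
-/

open Finset

theorem sum_Icc_choose_div_self {K : Type*} [Field K] [CharZero K] {m : ℕ} (hm : m ≠ 0)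
    (n : ℕ) : ∑ k ∈ Icc m n, (k.choose m : K) / k = n.choose m / m := by
  obtain ⟨j, rfl⟩ : ∃ j, m = j + 1 := ⟨m - 1, by omega⟩
  induction n with
  | zero => simp
  | succ n ih =>
    rcases lt_or_ge n j with h | h
    · rw [Icc_eq_empty (by omega), Nat.choose_eq_zero_of_lt (by omega)]
      simp
    rw [sum_Icc_succ_top (by omega), ih]
    have absorb : ((n + 1).choose (j + 1) : K) / (n + 1 : ℕ) = n.choose j / (j + 1 : ℕ) := by
      rw [div_eq_div_iff (Nat.cast_ne_zero.2 n.succ_ne_zero) (Nat.cast_ne_zero.2 j.succ_ne_zero)]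
      exact_mod_cast (n.add_one_mul_choose_eq j).symm.trans (mul_comm _ _)
    rw [absorb, ← add_div, Nat.choose_succ_succ' n j, add_comm (n.choose j),
      Nat.cast_add (n.choose (j + 1))]

theorem mem_chainsIcc {d lo hi : ℕ} {f : Fin d → ℕ} :
    f ∈ chainsIcc d lo hi ↔ (∀ i, f i ∈ Icc lo hi) ∧ ∀ i j : Fin d, i ≤ j → f j ≤ f i := by
  simp [chainsIcc]

theorem cons_mem_chainsIcc {d lo hi k : ℕ} {g : Fin d → ℕ} :
    (Fin.cons k g : Fin (d + 1) → ℕ) ∈ chainsIcc (d + 1) lo hi ↔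
      k ∈ Icc lo hi ∧ g ∈ chainsIcc d lo k := by
  simp only [mem_chainsIcc, Fin.forall_fin_succ, Fin.cons_zero, Fin.cons_succ, mem_Icc,
    Fin.succ_le_succ_iff, Fin.succ_ne_zero, le_refl, Fin.zero_le, Fin.le_zero_iff, imp_true_iff,
    true_and, false_implies, forall_const]
  constructor
  · rintro ⟨⟨hk, hg⟩, hgk, hmono⟩
    exact ⟨hk, fun i => ⟨(hg i).1, hgk i⟩, hmono⟩
  · rintro ⟨hk, hg, hmono⟩
    exact ⟨⟨hk, fun i => ⟨(hg i).1, (hg i).2.trans hk.2⟩⟩, fun i => (hg i).2, hmono⟩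

theorem chainsIcc_zero (lo hi : ℕ) : chainsIcc 0 lo hi = univ := by
  simp [chainsIcc]

theorem sum_chainsIcc_succ {M : Type*} [AddCommMonoid M] (d lo hi : ℕ)
    (F : (Fin (d + 1) → ℕ) → M) :
    ∑ f ∈ chainsIcc (d + 1) lo hi, F f =
      ∑ k ∈ Icc lo hi, ∑ g ∈ chainsIcc d lo k, F (Fin.cons k g) := by
  rw [sum_sigma']
  refine sum_bij' (fun f _ => ⟨f 0, Fin.tail f⟩) (fun p _ => Fin.cons p.1 p.2) ?_ ?_ ?_ ?_ ?_
  · intro f hf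
    rw [← Fin.cons_self_tail f, cons_mem_chainsIcc] at hf
    exact mem_sigma.2 hf
  · intro p hp
    exact cons_mem_chainsIcc.2 (mem_sigma.1 hp)
  · intro f _
    exact Fin.cons_self_tail f
  · intro p _
    simp
  · intro f _
    rw [Fin.cons_self_tail]

theorem idx_cons_one {w : ℕ} (k : ℕ) (g : Fin w → ℕ) :
    idx (Fin.cons k g : Fin (w + 1) → ℕ) 1 = k := by
  simp [idx]

theorem idx_cons_add_two {w : ℕ} (k : ℕ) (g : Fin w → ℕ) (j : ℕ) :
    idx (Fin.cons k g : Fin (w + 1) → ℕ) (j + 2) = idx g (j + 1) := by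
  by_cases h : j < w
  · simp [idx, h]
    rfl
  · simp [idx, h]

section
variable {A : Type*} [CommRing A] [Algebra ℚ A]

def altBinomSum (s n : ℕ) (t : A) : A :=
  ∑ m ∈ Icc 1 n, (((-1 : ℚ) ^ m * (n.choose m : ℚ)) * ((m : ℚ) ^ s)⁻¹) • t ^ m

def chainSum (s n : ℕ) (t : A) : A :=
  ∑ f ∈ chainsIcc s 1 n, (∏ j ∈ range s, (idx f (j + 1) : ℚ))⁻¹ • ((1 - t) ^ idx f s - 1)

theorem altBinomSum_zero (n : ℕ) (t : A) : altBinomSum 0 n t = (1 - t) ^ n - 1 := by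
  have hrange : range (n + 1) = insert 0 (Icc 1 n) := by
    ext m; simp; omega
  rw [sub_eq_neg_add (1 : A), add_pow, hrange, sum_insert (by simp), altBinomSum]
  simp [neg_pow t, Algebra.smul_def, mul_comm, mul_left_comm]

theorem altBinomSum_succ (s n : ℕ) (t : A) :
    altBinomSum (s + 1) n t = ∑ k ∈ Icc 1 n, (k : ℚ)⁻¹ • altBinomSum s k t := by
  simp only [altBinomSum, smul_sum, smul_smul]
  rw [sum_comm' (s' := fun m => Icc m n) (t' := Icc 1 n)
    (by intro k m; simp only [mem_Icc]; omega)]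
  refine sum_congr rfl fun m hm => ?_
  rw [← sum_smul]
  congr 1
  trans (-1) ^ m * ((m : ℚ) ^ s)⁻¹ * ∑ k ∈ Icc m n, (k.choose m : ℚ) / k
  · rw [sum_Icc_choose_div_self (Nat.one_le_iff_ne_zero.1 (mem_Icc.1 hm).1), pow_succ, mul_inv]
    ring
  · rw [mul_sum]
    exact sum_congr rfl fun k _ => by ring

/- The recursion on the chain side starts at `s = 1`: the junk value `idx f 0 = 0` makes
`chainSum 0 n t = 0`. -/
theorem chainSum_one (n : ℕ) (t : A) :
    chainSum 1 n t = ∑ k ∈ Icc 1 n, (k : ℚ)⁻¹ • ((1 - t) ^ k - 1) := by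
  simp [chainSum, sum_chainsIcc_succ, chainsIcc_zero, idx_cons_one]

theorem chainSum_succ {s : ℕ} (hs : 1 ≤ s) (n : ℕ) (t : A) :
    chainSum (s + 1) n t = ∑ k ∈ Icc 1 n, (k : ℚ)⁻¹ • chainSum s k t := by
  obtain ⟨s, rfl⟩ : ∃ r, s = r + 1 := ⟨s - 1, by omega⟩
  rw [chainSum, sum_chainsIcc_succ]
  simp only [chainSum, smul_sum]
  refine sum_congr rfl fun k _ => sum_congr rfl fun g _ => ?_
  rw [prod_range_succ', idx_cons_one, mul_inv, mul_comm, mul_smul]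
  simp only [idx_cons_add_two]

theorem altBinomSum_eq_chainSum {s : ℕ} (hs : 1 ≤ s) (n : ℕ) (t : A) :
    altBinomSum s n t = chainSum s n t := by
  induction s, hs using Nat.le_induction generalizing n with
  | base => simp only [altBinomSum_succ, altBinomSum_zero, chainSum_one]
  | succ s hs ih => simp only [altBinomSum_succ, chainSum_succ hs, ih]

end

theorem depth_one_sakugawa_seki_general {A : Type*} [CommRing A] [Algebra ℚ A]
    (s : ℕ) (hs : 1 ≤ s) (t : A) (n : ℕ) :
    ∑ m ∈ Finset.Icc 1 n, (((-1 : ℚ) ^ m * (n.choose m : ℚ)) * ((m : ℚ) ^ s)⁻¹) • t ^ m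
      = ∑ f ∈ chainsIcc s 1 n,
          (∏ j ∈ Finset.range s, (idx f (j + 1) : ℚ))⁻¹ • ((1 - t) ^ (idx f s) - 1) :=
  altBinomSum_eq_chainSum hs n t

theorem depth_one_sakugawa_seki {A : Type*} [CommRing A] [Algebra ℚ A]
    (s : ℕ) (hs : 1 ≤ s) (t : A) (n : ℕ) (hn : 1 ≤ n) :
    ∑ m ∈ Finset.Icc 1 n, (((-1 : ℚ) ^ m * (n.choose m : ℚ)) * ((m : ℚ) ^ s)⁻¹) • t ^ m
      = ∑ f ∈ chainsIcc s 1 n,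
          (∏ j ∈ Finset.range s, (idx f (j + 1) : ℚ))⁻¹ • ((1 - t) ^ (idx f s) - 1) :=
  depth_one_sakugawa_seki_general s hs t n
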